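/- Let ω be a non-negative integrable function on the interval (a,b) with ∫_a^b ω(y) dy = 1 and with y^k ω(y) integrable on (a,b) for every k ≥ 0, and let L_ω[f] = ∫_a^b f(y) ω(y) dy. Let (𝔭_k)_{k≥0} be a sequence of real polynomials with deg 𝔭_k = k orthogonal with respect to L_ω, let ζ ∉ (a,b) satisfy 𝔭_k(ζ) ≠ 0 for all k, and define K_n(x;ζ) = Σ_{k=0}^{n} (𝔭_k(ζ)/L_ω[𝔭_k^2]) 𝔭_k(x). Then for all real τ, σ and every n, ∫_a^b K_n(y;ζ) K_n((y−ζ)(τ+σx) + x; ζ) ω(y) dy = K_n(x;ζ) for all real x. -/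

import Mathlib

/-!
The kernel polynomial `Kₙ(·;ζ)` reproduces point evaluation at `ζ` on polynomials of degree
`≤ n`: `L[Kₙ(·;ζ) q] = q(ζ)`, since this holds on the orthogonal basis `𝔭₀, …, 𝔭ₙ`.
For fixed `x`, the function `y ↦ Kₙ((y - ζ)(τ + σx) + x; ζ)` is again a polynomial of degree
`≤ n`, and its value at `y = ζ` is `Kₙ(x;ζ)`.
-/

open MeasureTheory Set Polynomial

section MomentFunctional

variable {μ : Measure ℝ} {ω : ℝ → ℝ}

theorem Polynomial.integrable_eval_mul (hω : ∀ k : ℕ, Integrable (fun y => y ^ k * ω y) μ)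
    (q : ℝ[X]) : Integrable (fun y => q.eval y * ω y) μ := by
  refine (integrable_finsetSum (Finset.range (q.natDegree + 1))
    fun k _ => (hω k).const_mul (q.coeff k)).congr (ae_of_all _ fun y => ?_)
  simp only [eval_eq_sum_range, Finset.sum_mul, mul_assoc]

noncomputable def momentFunctional (μ : Measure ℝ) (ω : ℝ → ℝ)
    (hω : ∀ k : ℕ, Integrable (fun y => y ^ k * ω y) μ) : ℝ[X] →ₗ[ℝ] ℝ where
  toFun q := ∫ y, q.eval y * ω y ∂μ
  map_add' q r := by
    simp only [eval_add, add_mul]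
    exact integral_add (q.integrable_eval_mul hω) (r.integrable_eval_mul hω)
  map_smul' c q := by
    simp only [eval_smul, smul_eq_mul, mul_assoc, RingHom.id_apply]
    exact integral_const_mul c _

theorem momentFunctional_apply (hω : ∀ k : ℕ, Integrable (fun y => y ^ k * ω y) μ)
    (q : ℝ[X]) : momentFunctional μ ω hω q = ∫ y, q.eval y * ω y ∂μ :=
  rfl

end MomentFunctional

section KernelPolynomial

variable {F : Type*} [Field F] (L : F[X] →ₗ[F] F) (p : ℕ → F[X]) (ζ : F)

noncomputable def kernelPoly (n : ℕ) : F[X] :=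
  ∑ k ∈ Finset.range (n + 1), C ((p k).eval ζ / L (p k ^ 2)) * p k

variable {L p}

theorem eval_kernelPoly (n : ℕ) (x : F) :
    (kernelPoly L p ζ n).eval x =
      ∑ k ∈ Finset.range (n + 1), (p k).eval ζ / L (p k ^ 2) * (p k).eval x := by
  simp only [kernelPoly, eval_finsetSum, eval_mul, eval_C]

theorem natDegree_kernelPoly_le (hdeg : ∀ k, (p k).natDegree = k) (n : ℕ) :
    (kernelPoly L p ζ n).natDegree ≤ n :=
  natDegree_sum_le_of_forall_le _ _ fun k hk =>
    (natDegree_C_mul_le _ _).trans ((hdeg k).trans_le (Finset.mem_range_succ_iff.mp hk))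

theorem kernelPoly_mul_apply_of_le (horth : ∀ j k, j ≠ k → L (p j * p k) = 0)
    (hnorm : ∀ k, L (p k ^ 2) ≠ 0) {n j : ℕ} (hj : j ≤ n) :
    L (kernelPoly L p ζ n * p j) = (p j).eval ζ := by
  simp only [kernelPoly, Finset.sum_mul, ← smul_eq_C_mul, smul_mul_assoc, map_sum, map_smul,
    smul_eq_mul]
  rw [Finset.sum_eq_single_of_mem j (Finset.mem_range_succ_iff.mpr hj)
    fun k _ hkj => by rw [horth k j hkj, mul_zero], ← sq, div_mul_cancel₀ _ (hnorm j)]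

def orthogonalSequence (hdeg : ∀ k, (p k).natDegree = k) (hnorm : ∀ k, L (p k ^ 2) ≠ 0) :
    Sequence F where
  elems' := p
  degree_eq' k := by
    have hpk : p k ≠ 0 := fun h => hnorm k (by rw [h, zero_pow two_ne_zero, map_zero])
    rw [degree_eq_natDegree hpk, hdeg k]

theorem kernelPoly_mul_apply (hdeg : ∀ k, (p k).natDegree = k)
    (horth : ∀ j k, j ≠ k → L (p j * p k) = 0) (hnorm : ∀ k, L (p k ^ 2) ≠ 0)
    {n : ℕ} {q : F[X]} (hq : q.natDegree ≤ n) :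
    L (kernelPoly L p ζ n * q) = q.eval ζ := by
  let S := orthogonalSequence hdeg hnorm
  have hspan : Submodule.span F (S '' Iic n) = degreeLE F n :=
    S.span_degreeLE fun i _ => isUnit_iff_ne_zero.mpr (leadingCoeff_ne_zero.mpr (S.ne_zero i))
  have hq_mem : q ∈ Submodule.span F (S '' Iic n) := by
    rw [hspan, mem_degreeLE]
    exact natDegree_le_iff_degree_le.mp hq
  refine LinearMap.eqOn_span' (f := L ∘ₗ LinearMap.mulLeft F (kernelPoly L p ζ n))
    (g := leval ζ) ?_ hq_mem
  rintro _ ⟨j, hj, rfl⟩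
  exact kernelPoly_mul_apply_of_le ζ horth hnorm hj

theorem kernelPoly_mul_comp_apply (hdeg : ∀ k, (p k).natDegree = k)
    (horth : ∀ j k, j ≠ k → L (p j * p k) = 0) (hnorm : ∀ k, L (p k ^ 2) ≠ 0)
    (n : ℕ) (t x : F) :
    L (kernelPoly L p ζ n * (kernelPoly L p ζ n).comp (C t * X + C (x - t * ζ))) =
      (kernelPoly L p ζ n).eval x := by
  have hcomp : ((kernelPoly L p ζ n).comp (C t * X + C (x - t * ζ))).natDegree ≤ n :=
    natDegree_comp_le.trans <|
      (Nat.mul_le_mul (natDegree_kernelPoly_le ζ hdeg n) natDegree_linear_le).trans_eq (mul_one n)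
  rw [kernelPoly_mul_apply ζ hdeg horth hnorm hcomp, eval_comp]
  simp

end KernelPolynomial

theorem kernel_polynomials_solve_integral_eq_general (a b : ℝ) (ω : ℝ → ℝ)
    (h_moments : ∀ k : ℕ, IntegrableOn (fun y => y ^ k * ω y) (Ioo a b))
    -- the orthogonal polynomials 𝔭ₖ for L_ω
    (p : ℕ → Polynomial ℝ)
    (hpdeg : ∀ k, (p k).natDegree = k)
    (hporth : ∀ j k, j ≠ k →
      (∫ y in Ioo a b, (p j).eval y * (p k).eval y * ω y) = 0)
    (hpne : ∀ k, (∫ y in Ioo a b, ((p k).eval y) ^ 2 * ω y) ≠ 0)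
    (ζ : ℝ)
    -- the kernel polynomials Kₙ(x;ζ)
    (K : ℕ → ℝ → ℝ)
    (hK : ∀ n x, K n x = ∑ k ∈ Finset.range (n + 1),
      ((p k).eval ζ / (∫ y in Ioo a b, ((p k).eval y) ^ 2 * ω y)) * (p k).eval x) :
    ∀ (τ σ : ℝ) (n : ℕ) (x : ℝ),
      (∫ y in Ioo a b, K n y * K n ((y - ζ) * (τ + σ * x) + x) * ω y) = K n x := by
  intro τ σ n x
  set L := momentFunctional _ ω h_moments
  have hL : ∀ q, L q = ∫ y in Ioo a b, q.eval y * ω y := momentFunctional_apply h_moments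
  have hK_eval : ∀ m y, K m y = (kernelPoly L p ζ m).eval y := by
    intro m y
    simp only [hK, eval_kernelPoly, hL, eval_pow]
  have horth : ∀ j k, j ≠ k → L (p j * p k) = 0 := by
    simpa only [hL, eval_mul] using hporth
  have hnorm : ∀ k, L (p k ^ 2) ≠ 0 := by
    simpa only [hL, eval_pow] using hpne
  have h := kernelPoly_mul_comp_apply ζ hpdeg horth hnorm n (τ + σ * x) x
  rw [hL] at h
  simp only [hK_eval, ← h, eval_mul, eval_comp, eval_add, eval_C, eval_X]
  congr 1 with y
  congr 3
  ring

/-- **Corollary** (existence half) of Dominici, "Polynomial solutions of nonlinear integral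
equations": the kernel polynomials `Kₙ(x;ζ) = Σ_{k=0}^n (𝔭ₖ(ζ)/L_ω[𝔭ₖ²]) 𝔭ₖ(x)` solve the
nonlinear integral equation `∫ Kₙ(y;ζ) Kₙ((y-ζ)(τ+σx)+x;ζ) ω(y) dy = Kₙ(x;ζ)`. -/
theorem kernel_polynomials_solve_integral_eq (a b : ℝ) (ω : ℝ → ℝ)
    (hω_nonneg : ∀ y ∈ Ioo a b, 0 ≤ ω y)
    (hω_int : IntegrableOn ω (Ioo a b))
    (hω_norm : (∫ y in Ioo a b, ω y) = 1)
    (h_moments : ∀ k : ℕ, IntegrableOn (fun y => y ^ k * ω y) (Ioo a b))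
    -- the orthogonal polynomials 𝔭ₖ for L_ω
    (p : ℕ → Polynomial ℝ)
    (hpdeg : ∀ k, (p k).natDegree = k)
    (hporth : ∀ j k, j ≠ k →
      (∫ y in Ioo a b, (p j).eval y * (p k).eval y * ω y) = 0)
    (hpne : ∀ k, (∫ y in Ioo a b, ((p k).eval y) ^ 2 * ω y) ≠ 0)
    (ζ : ℝ) (hζ : ζ ∉ Ioo a b)
    (hpζ : ∀ k, (p k).eval ζ ≠ 0)
    -- the kernel polynomials Kₙ(x;ζ)
    (K : ℕ → ℝ → ℝ)
    (hK : ∀ n x, K n x = ∑ k ∈ Finset.range (n + 1),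
      ((p k).eval ζ / (∫ y in Ioo a b, ((p k).eval y) ^ 2 * ω y)) * (p k).eval x) :
    ∀ (τ σ : ℝ) (n : ℕ) (x : ℝ),
      (∫ y in Ioo a b, K n y * K n ((y - ζ) * (τ + σ * x) + x) * ω y) = K n x :=
  kernel_polynomials_solve_integral_eq_general a b ω h_moments p hpdeg hporth hpne ζ K hK
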